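/- arXiv:2306.17261 — 5 statements merged into one kernel-verified Lean document; each statement's English description precedes it below -/
import Mathlib

section
/- Let $k$ be a field and $A_0 \subseteq A$ an extension of $k$-algebras such that $A$ is finitely generated both as a left and as a right $A_0$-module. Then an ideal $I$ of $A$ has finite $k$-codimension in $A$ if and only if there exists an ideal $I_0$ of $A_0$ of finite $k$-codimension in $A_0$ with $I_0 \subseteq I$. -/
/-- A two-sided ideal of a (possibly noncommutative) `k`-algebra, viewed as a
`k`-submodule closed under left and right multiplication by arbitrary elements. -/
def IsTwoSidedIdealSubmodule {k A : Type*} [Field k] [Ring A] [Algebra k A]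
    (I : Submodule k A) : Prop :=
  ∀ a x : A, x ∈ I → a * x ∈ I ∧ x * a ∈ I

/-- Let `A₀ ⊆ A` be an extension of `k`-algebras such that `A` is
finitely generated both as a left and as a right `A₀`-module.  Then a two-sided ideal
`I` of `A` has finite `k`-codimension iff it contains (the image of) a two-sided ideal
`I₀` of `A₀` of finite `k`-codimension in `A₀`. -/
theorem finite_codim_iff_contains_finite_codim_ideal_of_base
    {k A : Type*} [Field k] [Ring A] [Algebra k A] (A₀ : Subalgebra k A)
    (hleft : ∃ (n : ℕ) (x : Fin n → A), ∀ a : A, ∃ c : Fin n → A₀,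
      a = ∑ i, x i * (c i : A))
    (hright : ∃ (n : ℕ) (y : Fin n → A), ∀ a : A, ∃ c : Fin n → A₀,
      a = ∑ i, (c i : A) * y i)
    (I : Submodule k A) (hI : IsTwoSidedIdealSubmodule I) :
    FiniteDimensional k (A ⧸ I) ↔
      ∃ I₀ : Submodule k A₀, IsTwoSidedIdealSubmodule I₀ ∧
        FiniteDimensional k (A₀ ⧸ I₀) ∧ ∀ x : A₀, x ∈ I₀ → (x : A) ∈ I := by
  constructor
  · intro hfin
    refine ⟨I.comap A₀.val.toLinearMap, ?_, ?_, ?_⟩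
    · intro a x hx
      constructor
      · exact (hI (a : A) (x : A) hx).1
      · exact (hI (a : A) (x : A) hx).2
    · -- A₀ ⧸ I₀ embeds into A ⧸ I
      set g : A₀ →ₗ[k] A ⧸ I := I.mkQ.comp A₀.val.toLinearMap with hg
      have hker : LinearMap.ker g = I.comap A₀.val.toLinearMap := by
        ext c
        simp [hg, Submodule.Quotient.mk_eq_zero]
      rw [← hker]
      have := g.quotKerEquivRange
      exact FiniteDimensional.of_injective
        ((LinearMap.range g).subtype.comp this.toLinearMap)
        ((Submodule.injective_subtype _).comp this.injective)
    · intro x hx; exact hx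
  · rintro ⟨I₀, hI₀, hfin₀, hsub⟩
    obtain ⟨n, x, hx⟩ := hleft
    -- for each i, the map c ↦ x i * c : A₀ → A ⧸ I kills I₀
    have hker : ∀ i : Fin n,
        I₀ ≤ LinearMap.ker (I.mkQ.comp ((LinearMap.mulLeft k (x i)).comp
          A₀.val.toLinearMap)) := by
      intro i c hc
      simp only [LinearMap.mem_ker, LinearMap.comp_apply, LinearMap.mulLeft_apply,
        Submodule.mkQ_apply, Submodule.Quotient.mk_eq_zero]
      exact (hI (x i) (c : A) (hsub c hc)).1
    set F : (Fin n → A₀ ⧸ I₀) →ₗ[k] A ⧸ I :=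
      ∑ i : Fin n, (I₀.liftQ _ (hker i)).comp (LinearMap.proj i) with hF
    have hsurj : Function.Surjective F := by
      intro b
      obtain ⟨a, rfl⟩ := I.mkQ_surjective b
      obtain ⟨c, hc⟩ := hx a
      refine ⟨fun i => Submodule.Quotient.mk (c i), ?_⟩
      simp only [hF, LinearMap.sum_apply, LinearMap.comp_apply, LinearMap.proj_apply]
      rw [hc]
      simp only [Submodule.mkQ_apply, map_sum]
      rfl
    exact Module.Finite.of_surjective F hsurj
end

section
/- Let $A$ and $B$ be $k$-algebras and let $\tau \colon B \otimes A \to A \otimes B$ be a linear map that is multiplicative, i.e. satisfies $\tau \circ (\mathrm{id}_B \otimes m_A) = (m_A \otimes \mathrm{id}_B) \circ (\mathrm{id}_A \otimes \tau) \circ (\tau \otimes \mathrm{id}_A)$. If $I_0$ is a subspace of $A$ with $\tau(B \otimes I_0) \subseteq I_0 \otimes B$, then the ideal $A I_0 A$ generated by $I_0$ satisfies $\tau(B \otimes A I_0 A) \subseteq A I_0 A \otimes B$. -/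
open TensorProduct

/-- Let `τ : B ⊗ A → A ⊗ B` be a multiplicative linear map (in the
sense of twisting maps).  If `I` is a two-sided ideal of `A` with `τ(B ⊗ I) ⊆ I ⊗ B`,
then for any `k`-subspace `I₀ ⊆ A` with `τ(B ⊗ I₀) ⊆ I₀ ⊗ B`, the two-sided ideal
`A·I₀·A` generated by `I₀` satisfies `τ(B ⊗ A·I₀·A) ⊆ A·I₀·A ⊗ B`. -/
theorem twist_stabilizes_generated_ideal
    {k A B : Type*} [Field k] [Ring A] [Algebra k A] [Ring B] [Algebra k B]
    (τ : B ⊗[k] A →ₗ[k] A ⊗[k] B)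
    (hmul : ∀ (b : B) (a a' : A),
      τ (b ⊗ₜ (a * a')) =
        TensorProduct.map (LinearMap.mul' k A) LinearMap.id
          ((TensorProduct.assoc k A A B).symm
            (TensorProduct.map LinearMap.id τ
              ((TensorProduct.assoc k A B A) ((τ (b ⊗ₜ a)) ⊗ₜ a')))))
    (I : Submodule k A)
    (hI : ∀ a x : A, x ∈ I → a * x ∈ I ∧ x * a ∈ I)
    (hIstab : ∀ z ∈ LinearMap.range
        (TensorProduct.map (LinearMap.id : B →ₗ[k] B) I.subtype),
      τ z ∈ LinearMap.range
        (TensorProduct.map I.subtype (LinearMap.id : B →ₗ[k] B)))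
    (I₀ : Submodule k A)
    (hI₀stab : ∀ z ∈ LinearMap.range
        (TensorProduct.map (LinearMap.id : B →ₗ[k] B) I₀.subtype),
      τ z ∈ LinearMap.range
        (TensorProduct.map I₀.subtype (LinearMap.id : B →ₗ[k] B))) :
    ∀ z ∈ LinearMap.range
        (TensorProduct.map (LinearMap.id : B →ₗ[k] B)
          (Submodule.span k {w : A | ∃ (a x b : A), x ∈ I₀ ∧ w = a * x * b}).subtype),
      τ z ∈ LinearMap.range
        (TensorProduct.map
          (Submodule.span k {w : A | ∃ (a x b : A), x ∈ I₀ ∧ w = a * x * b}).subtype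
          (LinearMap.id : B →ₗ[k] B)) := by
  classical
  set J := Submodule.span k {w : A | ∃ (a x b : A), x ∈ I₀ ∧ w = a * x * b} with hJdef
  set S := LinearMap.range
      (TensorProduct.map J.subtype (LinearMap.id : B →ₗ[k] B)) with hSdef
  have hmemS : ∀ w ∈ J, ∀ c : B, w ⊗ₜ[k] c ∈ S := by
    intro w hw c
    exact ⟨(⟨w, hw⟩ : J) ⊗ₜ c, rfl⟩
  have hJleft : ∀ (a₁ w : A), w ∈ J → a₁ * w ∈ J := by
    intro a₁ w hw
    induction hw using Submodule.span_induction with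
    | mem x hx =>
      obtain ⟨a, y, b, hy, rfl⟩ := hx
      refine Submodule.subset_span ⟨a₁ * a, y, b, hy, by simp [mul_assoc]⟩
    | zero => simpa using J.zero_mem
    | add x y hx hy ihx ihy => simpa [mul_add] using J.add_mem ihx ihy
    | smul c x hx ih => simpa [mul_smul_comm] using J.smul_mem c ih
  -- H a₁ : z ↦ (mul' ⊗ id)(assoc⁻¹ (a₁ ⊗ z))
  set H : A → (A ⊗[k] B →ₗ[k] A ⊗[k] B) := fun a₁ =>
    (TensorProduct.map (LinearMap.mul' k A) LinearMap.id) ∘ₗ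
      ((TensorProduct.assoc k A A B).symm.toLinearMap) ∘ₗ
        TensorProduct.mk k A (A ⊗[k] B) a₁ with hHdef
  have hHtmul : ∀ (a₁ a₃ : A) (b₃ : B), H a₁ (a₃ ⊗ₜ b₃) = (a₁ * a₃) ⊗ₜ b₃ := by
    intro a₁ a₃ b₃
    simp [hHdef, TensorProduct.assoc_symm_tmul]
  have hSright : ∀ x' ∈ I₀, ∀ z : A ⊗[k] B, H x' z ∈ S := by
    intro x' hx' z
    induction z using TensorProduct.induction_on with
    | zero => simpa using S.zero_mem
    | tmul a₃ b₃ =>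
      rw [hHtmul]
      exact hmemS _ (Submodule.subset_span ⟨1, x', a₃, hx', by rw [one_mul]⟩) _
    | add u v hu hv => simpa [map_add] using S.add_mem hu hv
  have hSleft : ∀ (a₁ : A), ∀ z ∈ S, H a₁ z ∈ S := by
    intro a₁ z hz
    obtain ⟨v, rfl⟩ := hz
    induction v using TensorProduct.induction_on with
    | zero => simpa using S.zero_mem
    | tmul w c =>
      have : TensorProduct.map J.subtype (LinearMap.id : B →ₗ[k] B) (w ⊗ₜ c)
          = (w : A) ⊗ₜ c := rfl
      rw [this, hHtmul]
      exact hmemS _ (hJleft a₁ w w.2) _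
    | add u v hu hv => simpa [map_add] using S.add_mem hu hv
  -- G a' : u ↦ (mul' ⊗ id)(assoc⁻¹ ((id ⊗ τ)(assoc (u ⊗ a'))))
  set G : A → (A ⊗[k] B →ₗ[k] A ⊗[k] B) := fun a' =>
    (TensorProduct.map (LinearMap.mul' k A) LinearMap.id) ∘ₗ
      ((TensorProduct.assoc k A A B).symm.toLinearMap) ∘ₗ
        (TensorProduct.map LinearMap.id τ) ∘ₗ
          ((TensorProduct.assoc k A B A).toLinearMap) ∘ₗ
            (TensorProduct.mk k (A ⊗[k] B) A).flip a' with hGdef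
  have hG : ∀ (b : B) (a a' : A), τ (b ⊗ₜ (a * a')) = G a' (τ (b ⊗ₜ a)) := by
    intro b a a'
    rw [hmul]
    rfl
  have hGtmul : ∀ (a' a₁ : A) (b₁ : B),
      G a' (a₁ ⊗ₜ b₁) = H a₁ (τ (b₁ ⊗ₜ a')) := by
    intro a' a₁ b₁
    simp [hGdef, hHdef, TensorProduct.assoc_tmul]
  have stepA : ∀ (b₁ : B) (x : A), x ∈ I₀ → ∀ a' : A,
      τ (b₁ ⊗ₜ (x * a')) ∈ S := by
    intro b₁ x hx a'
    rw [hG]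
    have hmem : (b₁ ⊗ₜ x : B ⊗[k] A) ∈ LinearMap.range
        (TensorProduct.map (LinearMap.id : B →ₗ[k] B) I₀.subtype) :=
      ⟨b₁ ⊗ₜ (⟨x, hx⟩ : I₀), rfl⟩
    obtain ⟨v, hv⟩ := hI₀stab _ hmem
    rw [← hv]
    clear hv
    induction v using TensorProduct.induction_on with
    | zero => simpa using S.zero_mem
    | tmul x' b₂ =>
      have : TensorProduct.map I₀.subtype (LinearMap.id : B →ₗ[k] B) (x' ⊗ₜ b₂)
          = (x' : A) ⊗ₜ b₂ := rfl
      rw [this, hGtmul]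
      exact hSright _ x'.2 _
    | add u v hu hv' => simpa [map_add] using S.add_mem hu hv'
  have stepB : ∀ (b : B) (a x a' : A), x ∈ I₀ →
      τ (b ⊗ₜ (a * (x * a'))) ∈ S := by
    intro b a x a' hx
    rw [hG]
    generalize τ (b ⊗ₜ a) = u
    induction u using TensorProduct.induction_on with
    | zero => simpa using S.zero_mem
    | tmul a₁ b₁ =>
      rw [hGtmul]
      exact hSleft a₁ _ (stepA b₁ x hx a')
    | add u v hu hv => simpa [map_add] using S.add_mem hu hv
  have hmain : ∀ (b : B), ∀ w ∈ J, τ (b ⊗ₜ w) ∈ S := by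
    intro b w hw
    induction hw using Submodule.span_induction with
    | mem x hx =>
      obtain ⟨a, y, b', hy, rfl⟩ := hx
      have : a * y * b' = a * (y * b') := by rw [mul_assoc]
      rw [this]
      exact stepB b a y b' hy
    | zero => simpa using S.zero_mem
    | add x y hx hy ihx ihy =>
      simpa [TensorProduct.tmul_add, map_add] using S.add_mem ihx ihy
    | smul c x hx ih =>
      simpa [TensorProduct.tmul_smul, map_smul] using S.smul_mem c ih
  intro z hz
  obtain ⟨v, rfl⟩ := hz
  induction v using TensorProduct.induction_on with
  | zero => simpa using S.zero_mem
  | tmul b w =>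
    have : TensorProduct.map (LinearMap.id : B →ₗ[k] B) J.subtype (b ⊗ₜ w)
        = b ⊗ₜ (w : A) := rfl
    rw [this]
    exact hmain b w w.2
  | add u v hu hv => simpa [map_add] using S.add_mem hu hv
end

section
/- Let $A$ and $B$ be $k$-algebras. A linear map $\tau \colon B \otimes A \to A \otimes B$ makes $m_\tau = (m_A \otimes m_B) \circ (\mathrm{id}_A \otimes \tau \otimes \mathrm{id}_B)$ an associative multiplication on $A \otimes B$ with unit $1_A \otimes 1_B$ if and only if $\tau$ is normal and multiplicative. -/
open TensorProduct

set_option synthInstance.maxHeartbeats 1000000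
set_option maxHeartbeats 1000000

variable {k A B : Type*} [Field k] [Ring A] [Algebra k A] [Ring B] [Algebra k B]

/-- The multiplication `m_τ = (m_A ⊗ m_B) ∘ (id_A ⊗ τ ⊗ id_B)` on `A ⊗ B` associated
to a linear map `τ : B ⊗ A → A ⊗ B` (with the implicit associators made explicit). -/
noncomputable def twistMul (τ : B ⊗[k] A →ₗ[k] A ⊗[k] B) :
    (A ⊗[k] B) ⊗[k] (A ⊗[k] B) →ₗ[k] A ⊗[k] B :=
  (TensorProduct.map (LinearMap.mul' k A) (LinearMap.mul' k B)) ∘ₗ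
  (TensorProduct.assoc k A A (B ⊗[k] B)).symm.toLinearMap ∘ₗ
  (TensorProduct.map LinearMap.id
    ((TensorProduct.assoc k A B B).toLinearMap ∘ₗ
     (TensorProduct.map τ LinearMap.id) ∘ₗ
     (TensorProduct.assoc k B A B).symm.toLinearMap)) ∘ₗ
  (TensorProduct.assoc k A B (A ⊗[k] B)).toLinearMap

noncomputable def lA (a : A) : A ⊗[k] B →ₗ[k] A ⊗[k] B :=
  TensorProduct.map (LinearMap.mulLeft k a) LinearMap.id

noncomputable def rB (b : B) : A ⊗[k] B →ₗ[k] A ⊗[k] B :=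
  TensorProduct.map LinearMap.id (LinearMap.mulRight k b)

@[simp] lemma lA_tmul (a c : A) (d : B) : lA (k := k) a (c ⊗ₜ d) = (a * c) ⊗ₜ d := rfl
@[simp] lemma rB_tmul (b : B) (c : A) (d : B) : rB (k := k) b (c ⊗ₜ d) = c ⊗ₜ (d * b) := rfl

noncomputable def psi (τ : B ⊗[k] A →ₗ[k] A ⊗[k] B) (a' : A) : A ⊗[k] B →ₗ[k] A ⊗[k] B :=
  TensorProduct.map (LinearMap.mul' k A) LinearMap.id ∘ₗ
  (TensorProduct.assoc k A A B).symm.toLinearMap ∘ₗ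
  TensorProduct.map LinearMap.id τ ∘ₗ
  (TensorProduct.assoc k A B A).toLinearMap ∘ₗ
  ((TensorProduct.mk k (A ⊗[k] B) A).flip a')

noncomputable def phi (τ : B ⊗[k] A →ₗ[k] A ⊗[k] B) (b : B) : A ⊗[k] B →ₗ[k] A ⊗[k] B :=
  TensorProduct.map LinearMap.id (LinearMap.mul' k B) ∘ₗ
  (TensorProduct.assoc k A B B).toLinearMap ∘ₗ
  TensorProduct.map τ LinearMap.id ∘ₗ
  (TensorProduct.assoc k B A B).symm.toLinearMap ∘ₗ
  (TensorProduct.mk k B (A ⊗[k] B) b)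

variable (τ : B ⊗[k] A →ₗ[k] A ⊗[k] B)

lemma psi_apply (a' : A) (t : A ⊗[k] B) :
    psi τ a' t = TensorProduct.map (LinearMap.mul' k A) LinearMap.id
      ((TensorProduct.assoc k A A B).symm
        (TensorProduct.map LinearMap.id τ
          ((TensorProduct.assoc k A B A) (t ⊗ₜ a')))) := rfl

lemma phi_apply (b : B) (t : A ⊗[k] B) :
    phi τ b t = TensorProduct.map LinearMap.id (LinearMap.mul' k B)
      ((TensorProduct.assoc k A B B)
        (TensorProduct.map τ LinearMap.id
          ((TensorProduct.assoc k B A B).symm (b ⊗ₜ t)))) := rfl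

lemma psi_tmul (a' c : A) (d : B) : psi τ a' (c ⊗ₜ d) = lA c (τ (d ⊗ₜ a')) := by
  have h : ∀ t : A ⊗[k] B,
      TensorProduct.map (LinearMap.mul' k A) LinearMap.id
        ((TensorProduct.assoc k A A B).symm (c ⊗ₜ t)) = lA c t := by
    intro t
    induction t using TensorProduct.induction_on with
    | zero => simp
    | tmul e f => simp [lA, LinearMap.mul'_apply]
    | add x y hx hy => simp [tmul_add, hx, hy]
  simp [psi_apply, h]

lemma phi_tmul (b : B) (c : A) (d : B) : phi τ b (c ⊗ₜ d) = rB d (τ (b ⊗ₜ c)) := by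
  have h : ∀ t : A ⊗[k] B,
      TensorProduct.map LinearMap.id (LinearMap.mul' k B)
        ((TensorProduct.assoc k A B B) (t ⊗ₜ d)) = rB d t := by
    intro t
    induction t using TensorProduct.induction_on with
    | zero => simp
    | tmul e f => simp [rB, LinearMap.mul'_apply]
    | add x y hx hy => simp [add_tmul, hx, hy]
  simp [phi_apply, h]

lemma twistMul_tmul (a a' : A) (b b' : B) :
    twistMul τ ((a ⊗ₜ b) ⊗ₜ (a' ⊗ₜ b')) = lA a (rB b' (τ (b ⊗ₜ a'))) := by
  have h : ∀ t : A ⊗[k] B,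
      TensorProduct.map (LinearMap.mul' k A) (LinearMap.mul' k B)
        ((TensorProduct.assoc k A A (B ⊗[k] B)).symm
          (a ⊗ₜ (TensorProduct.assoc k A B B (t ⊗ₜ b')))) = lA a (rB b' t) := by
    intro t
    induction t using TensorProduct.induction_on with
    | zero => simp
    | tmul e f => simp [lA, rB, LinearMap.mul'_apply]
    | add x y hx hy => simp [add_tmul, tmul_add, hx, hy]
  simp [twistMul, h]

lemma lA_one (t : A ⊗[k] B) : lA (k := k) (1 : A) t = t := by
  induction t using TensorProduct.induction_on with
  | zero => simp
  | tmul e f => simp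
  | add x y hx hy => simp [hx, hy]

lemma rB_one (t : A ⊗[k] B) : rB (k := k) (1 : B) t = t := by
  induction t using TensorProduct.induction_on with
  | zero => simp
  | tmul e f => simp
  | add x y hx hy => simp [hx, hy]

lemma lA_lA (a c : A) (t : A ⊗[k] B) : lA a (lA c t) = lA (k := k) (a * c) t := by
  induction t using TensorProduct.induction_on with
  | zero => simp
  | tmul e f => simp [mul_assoc]
  | add x y hx hy => simp [hx, hy]

lemma rB_rB (b d : B) (t : A ⊗[k] B) : rB b (rB d t) = rB (k := k) (d * b) t := by
  induction t using TensorProduct.induction_on with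
  | zero => simp
  | tmul e f => simp [mul_assoc]
  | add x y hx hy => simp [hx, hy]

lemma lA_rB_comm (a : A) (b : B) (t : A ⊗[k] B) : lA a (rB b t) = rB b (lA a t) := by
  induction t using TensorProduct.induction_on with
  | zero => simp
  | tmul e f => simp
  | add x y hx hy => simp [hx, hy]

lemma psi_lA (a' a : A) (s : A ⊗[k] B) : psi τ a' (lA a s) = lA a (psi τ a' s) := by
  induction s using TensorProduct.induction_on with
  | zero => simp
  | tmul c d => rw [lA_tmul, psi_tmul, psi_tmul, lA_lA]
  | add x y hx hy => simp [hx, hy]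

lemma phi_rB (b b'' : B) (s : A ⊗[k] B) : phi τ b (rB b'' s) = rB b'' (phi τ b s) := by
  induction s using TensorProduct.induction_on with
  | zero => simp
  | tmul c d => rw [rB_tmul, phi_tmul, phi_tmul, rB_rB]
  | add x y hx hy => simp [hx, hy]

lemma twistMul_tmul_left (a : A) (b : B) (s : A ⊗[k] B) :
    twistMul τ ((a ⊗ₜ b) ⊗ₜ s) = lA a (phi τ b s) := by
  induction s using TensorProduct.induction_on with
  | zero => simp [tmul_zero]
  | tmul a' b' => rw [twistMul_tmul, phi_tmul]
  | add x y hx hy => simp [tmul_add, hx, hy]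

lemma twistMul_tmul_right (a' : A) (b' : B) (s : A ⊗[k] B) :
    twistMul τ (s ⊗ₜ (a' ⊗ₜ b')) = rB b' (psi τ a' s) := by
  induction s using TensorProduct.induction_on with
  | zero => simp [zero_tmul]
  | tmul a b => rw [twistMul_tmul, psi_tmul, lA_rB_comm]
  | add x y hx hy => simp [add_tmul, hx, hy]

lemma K1 (hB : ∀ (b b' : B) (a : A), τ ((b * b') ⊗ₜ a) = phi τ b (τ (b' ⊗ₜ a)))
    (a'' : A) (b' : B) (s : A ⊗[k] B) :
    psi τ a'' (rB b' s) = twistMul τ (s ⊗ₜ τ (b' ⊗ₜ a'')) := by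
  induction s using TensorProduct.induction_on with
  | zero => simp [zero_tmul]
  | tmul u v => rw [rB_tmul, psi_tmul, twistMul_tmul_left, hB]
  | add x y hx hy => simp [add_tmul, hx, hy]

lemma K2 (hA : ∀ (b : B) (a a' : A), τ (b ⊗ₜ (a * a')) = psi τ a' (τ (b ⊗ₜ a)))
    (b : B) (a' : A) (t : A ⊗[k] B) :
    phi τ b (lA a' t) = twistMul τ (τ (b ⊗ₜ a') ⊗ₜ t) := by
  induction t using TensorProduct.induction_on with
  | zero => simp [tmul_zero]
  | tmul e f => rw [lA_tmul, phi_tmul, twistMul_tmul_right, hA]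
  | add x y hx hy => simp [tmul_add, hx, hy]

/-- A linear map `τ : B ⊗ A → A ⊗ B` makes
`m_τ = (m_A ⊗ m_B) ∘ (id_A ⊗ τ ⊗ id_B)` an associative multiplication on `A ⊗ B`
with unit `1_A ⊗ 1_B` if and only if `τ` is normal and multiplicative. -/
theorem twistMul_assoc_unital_iff_normal_multiplicative
    (τ : B ⊗[k] A →ₗ[k] A ⊗[k] B) :
    ((∀ x y z : A ⊗[k] B,
        twistMul τ ((twistMul τ (x ⊗ₜ y)) ⊗ₜ z) =
          twistMul τ (x ⊗ₜ (twistMul τ (y ⊗ₜ z)))) ∧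
     (∀ x : A ⊗[k] B,
        twistMul τ ((((1 : A) ⊗ₜ (1 : B)) : A ⊗[k] B) ⊗ₜ x) = x ∧
        twistMul τ (x ⊗ₜ (((1 : A) ⊗ₜ (1 : B)) : A ⊗[k] B)) = x))
    ↔
    ((∀ a : A, τ ((1 : B) ⊗ₜ a) = a ⊗ₜ (1 : B)) ∧
     (∀ b : B, τ (b ⊗ₜ (1 : A)) = (1 : A) ⊗ₜ b) ∧
     (∀ (b : B) (a a' : A),
        τ (b ⊗ₜ (a * a')) =
          TensorProduct.map (LinearMap.mul' k A) LinearMap.id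
            ((TensorProduct.assoc k A A B).symm
              (TensorProduct.map LinearMap.id τ
                ((TensorProduct.assoc k A B A) ((τ (b ⊗ₜ a)) ⊗ₜ a'))))) ∧
     (∀ (b b' : B) (a : A),
        τ ((b * b') ⊗ₜ a) =
          TensorProduct.map LinearMap.id (LinearMap.mul' k B)
            ((TensorProduct.assoc k A B B)
              (TensorProduct.map τ LinearMap.id
                ((TensorProduct.assoc k B A B).symm
                  (TensorProduct.map LinearMap.id τ (b ⊗ₜ (b' ⊗ₜ a)))))))) := by
  constructor
  · rintro ⟨hassoc, hunit⟩
    have hn1 : ∀ a : A, τ ((1 : B) ⊗ₜ a) = a ⊗ₜ (1 : B) := by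
      intro a
      have h := (hunit (a ⊗ₜ (1 : B))).1
      rwa [twistMul_tmul, rB_one, lA_one] at h
    have hn2 : ∀ b : B, τ (b ⊗ₜ (1 : A)) = (1 : A) ⊗ₜ b := by
      intro b
      have h := (hunit ((1 : A) ⊗ₜ b)).2
      rwa [twistMul_tmul, rB_one, lA_one] at h
    have hA : ∀ (b : B) (a a' : A), τ (b ⊗ₜ (a * a')) = psi τ a' (τ (b ⊗ₜ a)) := by
      intro b a a'
      have h := hassoc ((1 : A) ⊗ₜ b) (a ⊗ₜ (1 : B)) (a' ⊗ₜ (1 : B))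
      have e1 : twistMul τ (twistMul τ (((1 : A) ⊗ₜ b) ⊗ₜ (a ⊗ₜ (1 : B))) ⊗ₜ (a' ⊗ₜ (1 : B)))
          = psi τ a' (τ (b ⊗ₜ a)) := by
        rw [twistMul_tmul, rB_one, lA_one, twistMul_tmul_right, rB_one]
      have e2 : twistMul τ (((1 : A) ⊗ₜ b) ⊗ₜ twistMul τ ((a ⊗ₜ (1 : B)) ⊗ₜ (a' ⊗ₜ (1 : B))))
          = τ (b ⊗ₜ (a * a')) := by
        rw [twistMul_tmul τ a a' (1 : B) (1 : B), rB_one, hn1, lA_tmul,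
          twistMul_tmul, rB_one, lA_one]
      rw [e1, e2] at h
      exact h.symm
    have hB : ∀ (b b' : B) (a : A), τ ((b * b') ⊗ₜ a) = phi τ b (τ (b' ⊗ₜ a)) := by
      intro b b' a
      have h := hassoc ((1 : A) ⊗ₜ b) ((1 : A) ⊗ₜ b') (a ⊗ₜ (1 : B))
      have e1 : twistMul τ (twistMul τ (((1 : A) ⊗ₜ b) ⊗ₜ ((1 : A) ⊗ₜ b')) ⊗ₜ (a ⊗ₜ (1 : B)))
          = τ ((b * b') ⊗ₜ a) := by
        rw [twistMul_tmul τ (1 : A) (1 : A) b b', lA_one, hn2, rB_tmul,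
          twistMul_tmul, rB_one, lA_one]
      have e2 : twistMul τ (((1 : A) ⊗ₜ b) ⊗ₜ twistMul τ (((1 : A) ⊗ₜ b') ⊗ₜ (a ⊗ₜ (1 : B))))
          = phi τ b (τ (b' ⊗ₜ a)) := by
        rw [twistMul_tmul τ (1 : A) a b' (1 : B), rB_one, lA_one, twistMul_tmul_left, lA_one]
      rw [e1, e2] at h
      exact h
    exact ⟨hn1, hn2, fun b a a' => hA b a a', by
      intro b b' a
      rw [hB b b' a, phi_apply]
      simp⟩
  · rintro ⟨hn1, hn2, hA', hB'⟩
    have hA : ∀ (b : B) (a a' : A), τ (b ⊗ₜ (a * a')) = psi τ a' (τ (b ⊗ₜ a)) :=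
      fun b a a' => hA' b a a'
    have hB : ∀ (b b' : B) (a : A), τ ((b * b') ⊗ₜ a) = phi τ b (τ (b' ⊗ₜ a)) := by
      intro b b' a
      rw [phi_apply]
      simpa using hB' b b' a
    constructor
    · intro x y z
      induction x using TensorProduct.induction_on with
      | zero => simp [zero_tmul, tmul_zero]
      | add x1 x2 h1 h2 => simp [add_tmul, tmul_add, h1, h2]
      | tmul a b =>
        induction y using TensorProduct.induction_on with
        | zero => simp [zero_tmul, tmul_zero]
        | add y1 y2 h1 h2 => simp [add_tmul, tmul_add, h1, h2]
        | tmul a' b' =>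
          induction z using TensorProduct.induction_on with
          | zero => simp [zero_tmul, tmul_zero]
          | add z1 z2 h1 h2 => simp [add_tmul, tmul_add, h1, h2]
          | tmul a'' b'' =>
            rw [twistMul_tmul τ a a' b b', twistMul_tmul τ a' a'' b' b'',
              twistMul_tmul_right, twistMul_tmul_left,
              psi_lA, K1 τ hB, lA_rB_comm a' b'', phi_rB, K2 τ hA, lA_rB_comm]
    · intro x
      constructor
      · induction x using TensorProduct.induction_on with
        | zero => simp [tmul_zero]
        | tmul a b => rw [twistMul_tmul, hn1, rB_tmul, lA_tmul, one_mul, one_mul]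
        | add x y hx hy => simp [tmul_add, hx, hy]
      · induction x using TensorProduct.induction_on with
        | zero => simp [zero_tmul]
        | tmul a b => rw [twistMul_tmul, rB_one, hn2, lA_tmul, mul_one]
        | add x y hx hy => simp [add_tmul, hx, hy]
end

section
/- Let $k$ be a field of characteristic $p > 0$. In the Jordan plane $J = k\langle x, y \mid yx - xy = y^2 \rangle$, the elements $x^p$ and $y^p$ are central. -/
/-- The defining relation `y * x = x * y + y²` of the Jordan plane, as a relation on
the free algebra on two generators. -/
def jordanRel (k : Type*) [Field k] :
    FreeAlgebra k (Fin 2) → FreeAlgebra k (Fin 2) → Prop :=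
  fun a b =>
    a = FreeAlgebra.ι k (1 : Fin 2) * FreeAlgebra.ι k (0 : Fin 2) ∧
    b = FreeAlgebra.ι k (0 : Fin 2) * FreeAlgebra.ι k (1 : Fin 2) +
        FreeAlgebra.ι k (1 : Fin 2) ^ 2

/-- The Jordan plane `J = k⟨x, y⟩/(yx - xy - y²)`. -/
abbrev JordanPlane (k : Type*) [Field k] : Type _ := RingQuot (jordanRel k)

/-! In characteristic `p` the `p`-th power of `ad x = L_x - R_x` is `L_x^p - R_x^p = ad (x^p)`,
since left and right multiplication by `x` commute. The relation `yx = xy + y²` gives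
`(ad x)^m y = (-1)^m m! y^(m+1)`, which vanishes for `m = p`, and `y^m x = x y^m + m y^(m+1)`,
so `y^p` commutes with `x`. As `x` and `y` generate the Jordan plane,
commuting with both means being central. -/

theorem pow_char_mul_sub_mul_pow_char {A : Type*} [Ring A] (p : ℕ) [Fact p.Prime] [CharP A p]
    (x z : A) :
    x ^ p * z - z * x ^ p = ((LinearMap.mulLeft ℤ x - LinearMap.mulRight ℤ x) ^ p) z := by
  have : CharP (Module.End ℤ A) p :=
    charP_of_injective_ringHom (Algebra.lmul_injective (R := ℤ) (A := A)) p
  rw [sub_pow_char_of_commute p (LinearMap.commute_mulLeft_right x x),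
    LinearMap.sub_apply, LinearMap.pow_mulLeft, LinearMap.pow_mulRight, LinearMap.mulLeft_apply,
    LinearMap.mulRight_apply]

section JordanRelation

variable {A : Type*} {x y : A}

theorem pow_mul_eq_of_mul_eq_mul_add_sq [Semiring A] (h : y * x = x * y + y ^ 2) (m : ℕ) :
    y ^ m * x = x * y ^ m + m • y ^ (m + 1) := by
  induction m with
  | zero => simp
  | succ n ih =>
    calc y ^ (n + 1) * x = y ^ n * (y * x) := by rw [pow_succ, mul_assoc]
      _ = (y ^ n * x) * y + y ^ (n + 2) := by rw [h, mul_add, ← mul_assoc, ← pow_add]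
      _ = x * y ^ (n + 1) + (n + 1) • y ^ (n + 2) := by
        rw [ih, add_mul, smul_mul_assoc, mul_assoc, ← pow_succ, ← pow_succ, succ_nsmul,
          add_assoc]

theorem commutator_pow_apply_of_mul_eq_mul_add_sq [Ring A] (h : y * x = x * y + y ^ 2) (m : ℕ) :
    ((LinearMap.mulLeft ℤ x - LinearMap.mulRight ℤ x) ^ m) y =
      ((-1) ^ m * m.factorial : ℤ) • y ^ (m + 1) := by
  induction m with
  | zero => simp
  | succ n ih =>
    have hstep : (LinearMap.mulLeft ℤ x - LinearMap.mulRight ℤ x) (y ^ (n + 1)) =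
        -((n + 1 : ℕ) • y ^ (n + 2)) := by
      rw [LinearMap.sub_apply, LinearMap.mulLeft_apply, LinearMap.mulRight_apply,
        pow_mul_eq_of_mul_eq_mul_add_sq h, sub_add_cancel_left]
    rw [pow_succ', Module.End.mul_apply, ih, map_zsmul, hstep, smul_neg, ← natCast_zsmul,
      smul_smul, ← neg_smul]
    congr 1
    push_cast [Nat.factorial_succ]
    ring

theorem commute_pow_char_left_of_mul_eq_mul_add_sq [Ring A] (p : ℕ) [Fact p.Prime] [CharP A p]
    (h : y * x = x * y + y ^ 2) : Commute (x ^ p) y := by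
  have hfac : (p.factorial : A) = 0 :=
    (CharP.cast_eq_zero_iff A p _).2 (Nat.dvd_factorial (Fact.out : p.Prime).pos le_rfl)
  rw [Commute, SemiconjBy, ← sub_eq_zero, pow_char_mul_sub_mul_pow_char,
    commutator_pow_apply_of_mul_eq_mul_add_sq h, zsmul_eq_mul]
  push_cast
  rw [hfac, mul_zero, zero_mul]

theorem commute_pow_char_right_of_mul_eq_mul_add_sq [Semiring A] (p : ℕ) [CharP A p]
    (h : y * x = x * y + y ^ 2) : Commute (y ^ p) x := by
  rw [Commute, SemiconjBy, pow_mul_eq_of_mul_eq_mul_add_sq h, nsmul_eq_mul, CharP.cast_eq_zero,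
    zero_mul, add_zero]

end JordanRelation

namespace JordanPlane

variable (k : Type*) [Field k]

abbrev gen (i : Fin 2) : JordanPlane k :=
  RingQuot.mkAlgHom k (jordanRel k) (FreeAlgebra.ι k i)

theorem gen_one_mul_gen_zero : gen k 1 * gen k 0 = gen k 0 * gen k 1 + gen k 1 ^ 2 := by
  simpa only [map_mul, map_add, map_pow] using
    RingQuot.mkAlgHom_rel k (s := jordanRel k) ⟨rfl, rfl⟩

theorem adjoin_range_gen : Algebra.adjoin k (Set.range (gen k)) = ⊤ := by
  change Algebra.adjoin k (Set.range (RingQuot.mkAlgHom k (jordanRel k) ∘ FreeAlgebra.ι k)) = ⊤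
  rw [Set.range_comp, ← AlgHom.map_adjoin, FreeAlgebra.adjoin_range_ι, Algebra.map_top,
    AlgHom.range_eq_top]
  exact RingQuot.mkAlgHom_surjective k (jordanRel k)

variable {k}

theorem commute_of_forall_commute_gen {z : JordanPlane k} (h : ∀ i, Commute z (gen k i))
    (a : JordanPlane k) : Commute z a :=
  Algebra.commute_of_mem_adjoin_of_forall_mem_commute (adjoin_range_gen k ▸ Algebra.mem_top)
    (Set.forall_mem_range.2 h)

end JordanPlane

/-- Over a field of characteristic `p > 0`, the elements `x^p` and
`y^p` are central in the Jordan plane `k⟨x, y | yx - xy = y²⟩`. -/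
theorem jordan_pow_central_char_p
    {k : Type*} [Field k] (p : ℕ) [CharP k p] (hp : 0 < p) :
    let x : JordanPlane k :=
      RingQuot.mkAlgHom k (jordanRel k) (FreeAlgebra.ι k (0 : Fin 2))
    let y : JordanPlane k :=
      RingQuot.mkAlgHom k (jordanRel k) (FreeAlgebra.ι k (1 : Fin 2))
    ∀ a : JordanPlane k, x ^ p * a = a * x ^ p ∧ y ^ p * a = a * y ^ p := by
  intro x y a
  rcases subsingleton_or_nontrivial (JordanPlane k) with _ | _
  · exact ⟨Subsingleton.elim _ _, Subsingleton.elim _ _⟩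
  have : NeZero p := ⟨hp.ne'⟩
  have : Fact p.Prime := CharP.char_is_prime_of_pos k p
  have : CharP (JordanPlane k) p :=
    charP_of_injective_algebraMap (algebraMap k (JordanPlane k)).injective p
  have hrel : y * x = x * y + y ^ 2 := JordanPlane.gen_one_mul_gen_zero k
  have hxy : Commute (x ^ p) y := commute_pow_char_left_of_mul_eq_mul_add_sq p hrel
  have hyx : Commute (y ^ p) x := commute_pow_char_right_of_mul_eq_mul_add_sq p hrel
  refine ⟨JordanPlane.commute_of_forall_commute_gen (fun i => ?_) a,
    JordanPlane.commute_of_forall_commute_gen (fun i => ?_) a⟩ <;> fin_cases i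
  · exact Commute.self_pow x p |>.symm
  · exact hxy
  · exact hyx
  · exact Commute.self_pow y p |>.symm
end

section
/- Let $k$ be a field of characteristic zero. In the Jordan plane $J = k\langle x, y \mid yx - xy = y^2 \rangle$, the image of $y$ acts nilpotently on every finite-dimensional representation of $J$; equivalently, every two-sided ideal of $J$ of finite $k$-codimension contains a power of $y$. -/
open Polynomial

theorem poly_key {k : Type*} [Field k] [CharZero k] (p : k[X]) (hm : p.Monic)
    (hn : 0 < p.natDegree) (hd : p ∣ X ^ 2 * derivative p) : p = X ^ p.natDegree := by
  obtain ⟨m, hnm⟩ : ∃ m, p.natDegree = m + 1 := ⟨p.natDegree - 1, (Nat.succ_pred_eq_of_pos hn).symm⟩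
  have hp0 : p ≠ 0 := hm.ne_zero
  have hd' : (derivative p).natDegree = m := by
    have := degree_derivative_eq p hn
    rw [hnm] at this
    simpa using natDegree_eq_of_degree_eq_some this
  have hdp0 : derivative p ≠ 0 := by
    intro h
    have := natDegree_eq_zero_of_derivative_eq_zero h
    omega
  obtain ⟨q, hq⟩ := hd
  have hq0 : q ≠ 0 := by
    rintro rfl
    rw [mul_zero] at hq
    exact hdp0 ((mul_eq_zero.mp hq).resolve_left (pow_ne_zero 2 X_ne_zero))
  have hqd : q.natDegree = 1 := by
    have h1 : (X ^ 2 * derivative p).natDegree = m + 2 := by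
      rw [natDegree_mul (pow_ne_zero 2 X_ne_zero) hdp0, natDegree_X_pow, hd']; omega
    rw [hq, natDegree_mul hp0 hq0, hnm] at h1
    omega
  set a := q.coeff 1 with ha
  set b := q.coeff 0 with hb
  have hqeq : q = C a * X + C b := eq_X_add_C_of_natDegree_le_one hqd.le
  have hq' : derivative p * X ^ 2 = C a * (X * p) + C b * p := by
    rw [mul_comm, hq, hqeq]; ring
  have E : ∀ j, (derivative p * X ^ 2).coeff j = a * (X * p).coeff j + b * p.coeff j := by
    intro j; rw [hq']; simp [coeff_add, coeff_C_mul]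
  have E0 : b * p.coeff 0 = 0 := by
    have := E 0
    rw [coeff_mul_X_pow'] at this
    simpa using this.symm
  have E1 : a * p.coeff 0 + b * p.coeff 1 = 0 := by
    have := E 1
    rw [coeff_mul_X_pow'] at this
    simpa using this.symm
  have Ei : ∀ i : ℕ, p.coeff (i + 1) * ((i : k) + 1) = a * p.coeff (i + 1) + b * p.coeff (i + 2) := by
    intro i
    have := E (i + 2)
    rw [coeff_mul_X_pow'] at this
    simpa [coeff_derivative, coeff_X_mul] using this
  -- b = 0
  have hbz : b = 0 := by
    by_contra hbne
    have hc0 : p.coeff 0 = 0 := by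
      rcases mul_eq_zero.mp E0 with h | h
      · exact absurd h hbne
      · exact h
    have hcs : ∀ i : ℕ, p.coeff (i + 1) = 0 := by
      intro i
      induction i with
      | zero =>
        have : b * p.coeff 1 = 0 := by rw [hc0, mul_zero, zero_add] at E1; exact E1
        rcases mul_eq_zero.mp this with h | h
        · exact absurd h hbne
        · exact h
      | succ n ih =>
        have := Ei n
        rw [ih, zero_mul, mul_zero, zero_add] at this
        rcases mul_eq_zero.mp this.symm with h | h
        · exact absurd h hbne
        · exact h
    have : p.coeff (m + 1) = 1 := by
      have := hm.coeff_natDegree; rwa [hnm] at this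
    rw [hcs m] at this
    exact one_ne_zero this.symm
  -- a = m + 1
  have hcoefftop : p.coeff (m + 1) = 1 := by
    have := hm.coeff_natDegree; rwa [hnm] at this
  have hhigh : p.coeff (m + 2) = 0 := by
    apply coeff_eq_zero_of_natDegree_lt; omega
  have haval : a = (m : k) + 1 := by
    have := Ei m
    rw [hcoefftop, hhigh, hbz, zero_mul, add_zero, mul_one, one_mul] at this
    exact this.symm
  -- all other coeffs vanish
  have hc0 : p.coeff 0 = 0 := by
    rw [hbz, zero_mul, add_zero] at E1
    rcases mul_eq_zero.mp E1 with h | h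
    · rw [haval] at h
      exfalso
      have : ((m : k) + 1) ≠ 0 := by
        have : ((m + 1 : ℕ) : k) ≠ 0 := Nat.cast_ne_zero.mpr (Nat.succ_ne_zero m)
        simpa using this
      exact this h
    · exact h
  have hci : ∀ i : ℕ, i ≠ m → p.coeff (i + 1) = 0 := by
    intro i him
    have := Ei i
    rw [hbz, zero_mul, add_zero, haval] at this
    have h2 : p.coeff (i + 1) * (((i : k) + 1) - ((m : k) + 1)) = 0 := by
      rw [mul_sub, this]; ring
    rcases mul_eq_zero.mp h2 with h | h
    · exact h
    · exfalso
      apply him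
      have h3 : (i : k) + 1 = (m : k) + 1 := sub_eq_zero.mp h
      have : (i : k) = (m : k) := by
        have := add_right_cancel h3
        exact this
      exact_mod_cast this
  rw [hnm]
  ext j
  rw [coeff_X_pow]
  rcases j with _ | i
  · simp [hc0]
  · by_cases hi : i = m
    · subst hi; simp [hcoefftop]
    · rw [hci i hi, if_neg (by omega)]
theorem op_key {k V : Type*} [Field k] [CharZero k] [AddCommGroup V] [Module k V]
    [FiniteDimensional k V] (A B : Module.End k V) (h : B * A = A * B + B ^ 2) :
    ∃ n : ℕ, B ^ n = 0 := by
  rcases subsingleton_or_nontrivial (Module.End k V) with hs | hnt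
  · exact ⟨1, Subsingleton.elim _ _⟩
  have pow_rel : ∀ m : ℕ, B ^ m * A = A * B ^ m + (m : k) • B ^ (m + 1) := by
    intro m
    induction m with
    | zero => simp
    | succ n ih =>
      calc B ^ (n + 1) * A = B * (B ^ n * A) := by rw [← mul_assoc, ← pow_succ']
        _ = B * (A * B ^ n) + (n : k) • (B * B ^ (n + 1)) := by
            rw [ih, mul_add, mul_smul_comm]
        _ = (B * A) * B ^ n + (n : k) • B ^ (n + 2) := by rw [← mul_assoc, ← pow_succ']
        _ = A * B ^ (n + 1) + B ^ (n + 2) + (n : k) • B ^ (n + 2) := by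
            rw [h, add_mul, mul_assoc, ← pow_succ',
              show B ^ 2 * B ^ n = B ^ (n + 2) by rw [← pow_add, Nat.add_comm]]
        _ = A * B ^ (n + 1) + ((n : k) + 1) • B ^ (n + 2) := by
            rw [add_smul, one_smul]; abel
        _ = A * B ^ (n + 1) + ((n + 1 : ℕ) : k) • B ^ (n + 1 + 1) := by push_cast; ring_nf
  have comm : ∀ q : Polynomial k,
      Polynomial.aeval B q * A - A * Polynomial.aeval B q
        = B ^ 2 * Polynomial.aeval B (Polynomial.derivative q) := by
    intro q
    induction q using Polynomial.induction_on' with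
    | add f g hf hg =>
      rw [map_add, map_add, map_add, add_mul, mul_add, mul_add]
      calc Polynomial.aeval B f * A + Polynomial.aeval B g * A
            - (A * Polynomial.aeval B f + A * Polynomial.aeval B g)
          = (Polynomial.aeval B f * A - A * Polynomial.aeval B f)
            + (Polynomial.aeval B g * A - A * Polynomial.aeval B g) := by abel
        _ = _ := by rw [hf, hg]
    | monomial n c =>
      rw [Polynomial.aeval_monomial, Polynomial.derivative_monomial, Polynomial.aeval_monomial]
      rcases n with _ | m
      · simp [Algebra.commutes]
      · have key := pow_rel (m + 1)
        have hsm : algebraMap k _ c * B ^ (m + 1) * A - A * (algebraMap k _ c * B ^ (m + 1))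
            = c • (B ^ (m + 1) * A - A * B ^ (m + 1)) := by
          rw [Algebra.algebraMap_eq_smul_one]
          simp [smul_mul_assoc, mul_smul_comm, smul_sub]
        rw [hsm, key, add_sub_cancel_left, smul_smul, Nat.add_sub_cancel,
          ← Algebra.smul_def, mul_smul_comm, ← pow_add,
          show 2 + m = m + 1 + 1 from by omega]
  have hBint : IsIntegral k B := Algebra.IsIntegral.isIntegral B
  set p := minpoly k B with hp
  have haev : Polynomial.aeval B p = 0 := minpoly.aeval k B
  have hcomm := comm p
  rw [haev, zero_mul, mul_zero, sub_zero] at hcomm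
  have hdvd : p ∣ Polynomial.X ^ 2 * Polynomial.derivative p :=
    minpoly.dvd k B (by rw [map_mul, map_pow, Polynomial.aeval_X, ← hcomm])
  have hmon : p.Monic := minpoly.monic hBint
  have hpos : 0 < p.natDegree := minpoly.natDegree_pos hBint
  have hXn : p = Polynomial.X ^ p.natDegree := poly_key p hmon hpos hdvd
  refine ⟨p.natDegree, ?_⟩
  have := haev
  rw [hXn, map_pow, Polynomial.aeval_X] at this
  exact this

set_option maxHeartbeats 1000000 in
/-- Over a field of characteristic zero, in the Jordan plane the
image of `y` acts nilpotently on every finite-dimensional representation;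
equivalently, every two-sided ideal of finite `k`-codimension contains a power of
`y`. -/
theorem jordanPlane_y_nilpotent_char_zero
    {k : Type*} [Field k] [CharZero k] :
    let y : JordanPlane k :=
      RingQuot.mkAlgHom k (jordanRel k) (FreeAlgebra.ι k (1 : Fin 2))
    (∀ (V : Type) [AddCommGroup V] [Module k V] [FiniteDimensional k V]
        (ρ : JordanPlane k →ₐ[k] Module.End k V), ∃ n : ℕ, ρ y ^ n = 0) ∧
    (∀ I : Submodule k (JordanPlane k),
        (∀ a x : JordanPlane k, x ∈ I → a * x ∈ I ∧ x * a ∈ I) →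
        FiniteDimensional k (JordanPlane k ⧸ I) → ∃ n : ℕ, y ^ n ∈ I) := by
  intro y
  set x : JordanPlane k :=
    RingQuot.mkAlgHom k (jordanRel k) (FreeAlgebra.ι k (0 : Fin 2)) with hx
  have hrel : y * x = x * y + y ^ 2 := by
    have h := RingQuot.mkAlgHom_rel k
      (show jordanRel k
        (FreeAlgebra.ι k (1 : Fin 2) * FreeAlgebra.ι k (0 : Fin 2))
        (FreeAlgebra.ι k (0 : Fin 2) * FreeAlgebra.ι k (1 : Fin 2) +
          FreeAlgebra.ι k (1 : Fin 2) ^ 2) from ⟨rfl, rfl⟩)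
    simpa only [map_mul, map_add, map_pow] using h
  constructor
  · intro V _ _ _ ρ
    refine op_key (ρ x) (ρ y) ?_
    have h2 : ρ (y * x) = ρ (x * y + y ^ 2) := congrArg ρ hrel
    simpa only [map_mul, map_add, map_pow] using h2
  · intro I hI hFD
    -- the left-regular representation on the quotient
    have hcond : ∀ a : JordanPlane k,
        I ≤ I.comap (LinearMap.mulLeft k a) := fun a z hz => (hI a z hz).1
    let L : JordanPlane k → Module.End k (JordanPlane k ⧸ I) := fun a =>
      Submodule.mapQ I I (LinearMap.mulLeft k a) (hcond a)
    have Lmk : ∀ (a w : JordanPlane k),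
        L a (Submodule.Quotient.mk w) = Submodule.Quotient.mk (a * w) := by
      intro a w
      simp [L, Submodule.mapQ_apply, LinearMap.mulLeft_apply]
    let ρ : JordanPlane k →ₐ[k] Module.End k (JordanPlane k ⧸ I) :=
      { toFun := L
        map_one' := by
          refine LinearMap.ext fun z => ?_
          obtain ⟨w, rfl⟩ := Submodule.Quotient.mk_surjective I z
          rw [Lmk, one_mul]; rfl
        map_mul' := fun a b => by
          refine LinearMap.ext fun z => ?_
          obtain ⟨w, rfl⟩ := Submodule.Quotient.mk_surjective I z
          simp only [Module.End.mul_apply, Lmk, mul_assoc]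
        map_zero' := by
          refine LinearMap.ext fun z => ?_
          obtain ⟨w, rfl⟩ := Submodule.Quotient.mk_surjective I z
          rw [Lmk, zero_mul]
          simp only [LinearMap.zero_apply, Submodule.Quotient.mk_zero]
        map_add' := fun a b => by
          refine LinearMap.ext fun z => ?_
          obtain ⟨w, rfl⟩ := Submodule.Quotient.mk_surjective I z
          simp only [LinearMap.add_apply, Lmk, add_mul, Submodule.Quotient.mk_add]
        commutes' := fun c => by
          refine LinearMap.ext fun z => ?_
          obtain ⟨w, rfl⟩ := Submodule.Quotient.mk_surjective I z
          rw [Lmk, Module.algebraMap_end_apply, ← Algebra.smul_def]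
          exact Submodule.Quotient.mk_smul I c w }
    obtain ⟨n, hn⟩ : ∃ n : ℕ, ρ y ^ n = 0 := by
      refine op_key (ρ x) (ρ y) ?_
      have h2 : ρ (y * x) = ρ (x * y + y ^ 2) := congrArg ρ hrel
      simpa only [map_mul, map_add, map_pow] using h2
    refine ⟨n, ?_⟩
    have h1 : (ρ (y ^ n)) (Submodule.Quotient.mk 1) = 0 := by
      rw [map_pow, hn, LinearMap.zero_apply]
    rw [show ρ (y ^ n) = L (y ^ n) from rfl, Lmk, mul_one,
      Submodule.Quotient.mk_eq_zero] at h1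
    exact h1
end
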